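/- Mod 4 reduction of the Brown-Kervaire invariant: for a nonsingular quadratic enhancement (V, λ, q) over ℤ/2 with characteristic element v (λ(x,x)=λ(x,v) for all x), the reduction of BK(V,λ,q) ∈ ℤ/8 modulo 4 equals q(v) ∈ ℤ/4. -/
import Mathlib

open Complex Finset

private lemma I_pow_mod' (m : ℕ) : Complex.I ^ m = Complex.I ^ (m % 4) := by
  conv_lhs => rw [← Nat.div_add_mod m 4]
  rw [pow_add, pow_mul, Complex.I_pow_four, one_pow, one_mul]

private lemma I_pow_inj' {m n : ℕ} (h : Complex.I ^ m = Complex.I ^ n) : m % 4 = n % 4 := by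
  rw [I_pow_mod' m, I_pow_mod' n] at h
  have hm : m % 4 < 4 := Nat.mod_lt m (by norm_num)
  have hn : n % 4 < 4 := Nat.mod_lt n (by norm_num)
  interval_cases hm' : m % 4 <;> interval_cases hn' : n % 4 <;>
    simp_all [pow_succ, Complex.ext_iff] <;> norm_num at h

private lemma f_add' (a c : ZMod 4) :
    Complex.I ^ ((a + c).val) = Complex.I ^ a.val * Complex.I ^ c.val := by
  rw [← pow_add, I_pow_mod' ((a + c).val), I_pow_mod' (a.val + c.val)]
  congr 1
  have h := ZMod.val_add a c
  omega

private lemma f_conj' (a : ZMod 4) :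
    (starRingEnd ℂ) (Complex.I ^ a.val) = Complex.I ^ (-a).val := by
  have h1 : Complex.I ^ a.val * Complex.I ^ (-a).val = 1 := by
    rw [← f_add' a (-a)]
    simp
  have h2 : (starRingEnd ℂ) (Complex.I ^ a.val) * Complex.I ^ a.val = 1 := by
    rw [map_pow, Complex.conj_I, ← mul_pow]
    norm_num [Complex.I_mul_I]
  calc (starRingEnd ℂ) (Complex.I ^ a.val)
      = (starRingEnd ℂ) (Complex.I ^ a.val) * (Complex.I ^ a.val * Complex.I ^ (-a).val) := by
        rw [h1, mul_one]
    _ = ((starRingEnd ℂ) (Complex.I ^ a.val) * Complex.I ^ a.val) * Complex.I ^ (-a).val := by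
        ring
    _ = Complex.I ^ (-a).val := by rw [h2, one_mul]

/-- Mod 4 reduction of the Brown-Kervaire invariant: for a nonsingular quadratic
enhancement `(V, lam, q)` with characteristic element `v` (`lam x x = lam x v` for all `x`),
the reduction of `BK(V,lam,q) ∈ ℤ/8` modulo `4` equals `q v ∈ ℤ/4`. -/
theorem brown_kervaire_mod_four {V : Type} [AddCommGroup V] [Module (ZMod 2) V]
    [Fintype V] [FiniteDimensional (ZMod 2) V]
    (lam : LinearMap.BilinForm (ZMod 2) V)
    (hsymm : ∀ x y : V, lam x y = lam y x)
    (hnd : lam.Nondegenerate)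
    (q : V → ZMod 4)
    (hq : ∀ x y : V, q (x + y) = q x + q y + 2 * ((lam x y).val : ZMod 4))
    (v : V) (hv : ∀ x : V, lam x x = lam x v)
    (b : ZMod 8)
    (hb : (∑ x : V, Complex.I ^ (q x).val)
        = ((Real.sqrt 2) ^ (Module.finrank (ZMod 2) V) : ℝ)
          * Complex.exp (2 * Real.pi * Complex.I * (b.val : ℂ) / 8)) :
    ((b.val : ZMod 4)) = q v := by
  -- x + x = 0
  have hxx : ∀ x : V, x + x = 0 := by
    intro x
    have h := two_smul (ZMod 2) x
    rw [show (2 : ZMod 2) = 0 from rfl, zero_smul] at h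
    exact h.symm
  -- q 0 = 0
  have hq0 : q 0 = 0 := by
    have h := hq 0 0
    simp only [add_zero, map_zero, LinearMap.zero_apply] at h
    have : (0 : ZMod 2).val = 0 := rfl
    rw [this] at h
    push_cast at h
    linear_combination -h
  -- key : q (x + v) = q v - q x
  have hkey : ∀ x : V, q (x + v) = q v - q x := by
    intro x
    have h1 := hq x v
    have h2 := hq x x
    rw [hxx x, hq0] at h2
    rw [← hv x] at h1
    linear_combination h1 - h2
  -- main Gauss-sum identity
  set S : ℂ := ∑ x : V, Complex.I ^ (q x).val with hSdef
  have hS : S = Complex.I ^ (q v).val * (starRingEnd ℂ) S := by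
    calc S = ∑ x : V, Complex.I ^ (q (x + v)).val :=
          (Fintype.sum_equiv (Equiv.addRight v) _ _ (fun x => rfl)).symm
      _ = ∑ x : V, Complex.I ^ (q v).val * Complex.I ^ (-(q x)).val := by
          refine Finset.sum_congr rfl fun x _ => ?_
          rw [hkey x, sub_eq_add_neg, f_add']
      _ = Complex.I ^ (q v).val * ∑ x : V, Complex.I ^ (-(q x)).val := by
          rw [← Finset.mul_sum]
      _ = Complex.I ^ (q v).val * ∑ x : V, (starRingEnd ℂ) (Complex.I ^ (q x).val) := by
          refine congrArg _ (Finset.sum_congr rfl fun x _ => ?_)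
          rw [f_conj']
      _ = Complex.I ^ (q v).val * (starRingEnd ℂ) S := by rw [map_sum]
  -- substitute hb
  set θ : ℂ := 2 * Real.pi * Complex.I * (b.val : ℂ) / 8 with hθ
  set r : ℝ := (Real.sqrt 2) ^ (Module.finrank (ZMod 2) V) with hr
  have hrne : (r : ℂ) ≠ 0 := by
    have : (0 : ℝ) < r := pow_pos (Real.sqrt_pos.mpr (by norm_num)) _
    exact_mod_cast ne_of_gt this
  have hconjθ : (starRingEnd ℂ) θ = -θ := by
    rw [hθ]
    simp only [map_div₀, map_mul, Complex.conj_I, Complex.conj_natCast, Complex.conj_ofReal, map_ofNat]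
    ring
  have hconjS : (starRingEnd ℂ) S = (r : ℂ) * Complex.exp (-θ) := by
    rw [hb, map_mul, Complex.conj_ofReal, ← Complex.exp_conj, hconjθ]
  rw [hconjS, hb] at hS
  -- cancel r
  have hE : Complex.exp θ = Complex.I ^ (q v).val * Complex.exp (-θ) :=
    mul_left_cancel₀ hrne (by linear_combination hS)
  have hfinal : Complex.I ^ b.val = Complex.I ^ (q v).val := by
    have h2θ : Complex.exp θ * Complex.exp θ = Complex.I ^ b.val := by
      rw [← Complex.exp_add]
      have : θ + θ = (b.val : ℂ) * ((Real.pi : ℂ) / 2 * Complex.I) := by rw [hθ]; ring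
      rw [this, Complex.exp_nat_mul]
      congr 1
      rw [show ((Real.pi : ℂ) / 2 * Complex.I) = ((Real.pi / 2 : ℝ) : ℂ) * Complex.I by push_cast; ring,
        Complex.exp_mul_I]
      simp [Real.cos_pi_div_two, Real.sin_pi_div_two]
    rw [← h2θ]
    nth_rewrite 2 [hE]
    rw [mul_comm, mul_assoc, ← Complex.exp_add]
    simp
  have hmod := I_pow_inj' hfinal
  have : ((b.val : ℕ) : ZMod 4) = (((q v).val : ℕ) : ZMod 4) := by
    rw [ZMod.natCast_eq_natCast_iff]
    exact hmod
  rw [this, ZMod.natCast_val, ZMod.cast_id]
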